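/- Let (X,d) be a metric space, ℓ, n ≥ 1, a : Fin ℓ → Fin n → X a colored point configuration, and let t* : Fin ℓ be a minimizer of the map t ↦ Σ_{i : Fin ℓ} EMD(a t, a i). Let β ≥ 1 and suppose that for each color i there is a permutation π i of Fin n whose matching cost is β-approximate: Σ_{s : Fin n} d(a i s, a t* ((π i) s)) ≤ β · EMD(a i, a t*). Then the fair n-clustering that places, for each s, the points a i ((π i)⁻¹-matched to s) into the cluster centered at a t* s has total cost Σ_{i : Fin ℓ} Σ_{s : Fin n} d(a i s, a t* ((π i) s)) ≤ 2β · Σ_{i : Fin ℓ} EMD(a i, b) for every b : Fin n → X; i.e., it is a 2β-approximate fair n-median clustering. -/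
import Mathlib


/-- The Earth Mover's distance between two `n`-tuples of points of a metric space:
the minimum over permutations `π` of `Fin n` of `∑ t, dist (x t) (y (π t))`. -/
noncomputable def EMD {X : Type*} [MetricSpace X] {n : ℕ} (x y : Fin n → X) : ℝ :=
  Finset.univ.inf' ⟨1, Finset.mem_univ 1⟩
    (fun π : Equiv.Perm (Fin n) => ∑ t, dist (x t) (y (π t)))

lemma EMD_le {X : Type*} [MetricSpace X] {n : ℕ} (x y : Fin n → X) (π : Equiv.Perm (Fin n)) :
    EMD x y ≤ ∑ t, dist (x t) (y (π t)) :=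
  Finset.inf'_le _ (Finset.mem_univ π)

lemma EMD_exists {X : Type*} [MetricSpace X] {n : ℕ} (x y : Fin n → X) :
    ∃ π : Equiv.Perm (Fin n), EMD x y = ∑ t, dist (x t) (y (π t)) := by
  obtain ⟨π, -, h⟩ := Finset.exists_mem_eq_inf' (s := (Finset.univ : Finset (Equiv.Perm (Fin n))))
    ⟨1, Finset.mem_univ 1⟩ (fun π => ∑ t, dist (x t) (y (π t)))
  exact ⟨π, h⟩

lemma EMD_nonneg {X : Type*} [MetricSpace X] {n : ℕ} (x y : Fin n → X) :
    0 ≤ EMD x y := by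
  obtain ⟨π, h⟩ := EMD_exists x y
  rw [h]
  exact Finset.sum_nonneg fun t _ => dist_nonneg

lemma EMD_symm {X : Type*} [MetricSpace X] {n : ℕ} (x y : Fin n → X) :
    EMD x y = EMD y x := by
  have key : ∀ (u v : Fin n → X), EMD u v ≤ EMD v u := by
    intro u v
    obtain ⟨π, h⟩ := EMD_exists v u
    calc EMD u v ≤ ∑ t, dist (u t) (v (π⁻¹ t)) := EMD_le u v π⁻¹
      _ = ∑ t, dist (u (π t)) (v (π⁻¹ (π t))) := (Equiv.sum_comp π _).symm
      _ = ∑ t, dist (v t) (u (π t)) := by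
          simp [dist_comm]
      _ = EMD v u := h.symm
  exact le_antisymm (key x y) (key y x)

lemma EMD_triangle {X : Type*} [MetricSpace X] {n : ℕ} (x y z : Fin n → X) :
    EMD x z ≤ EMD x y + EMD y z := by
  obtain ⟨π1, h1⟩ := EMD_exists x y
  obtain ⟨π2, h2⟩ := EMD_exists y z
  calc EMD x z ≤ ∑ t, dist (x t) (z ((π2 * π1) t)) := EMD_le x z (π2 * π1)
    _ ≤ ∑ t, (dist (x t) (y (π1 t)) + dist (y (π1 t)) (z (π2 (π1 t)))) := by
        apply Finset.sum_le_sum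
        intro t _
        exact dist_triangle _ _ _
    _ = (∑ t, dist (x t) (y (π1 t))) + ∑ t, dist (y (π1 t)) (z (π2 (π1 t))) :=
        Finset.sum_add_distrib
    _ = (∑ t, dist (x t) (y (π1 t))) + ∑ t, dist (y t) (z (π2 t)) := by
        rw [Equiv.sum_comp π1 (fun t => dist (y t) (z (π2 t)))]
    _ = EMD x y + EMD y z := by rw [h1, h2]

/-- Combining the best color `t*` with `β`-approximate matchings `π i` of each color
to color `t*` yields a `2β`-approximate fair `n`-median clustering: its total cost
`∑ i, ∑ s, d(a i s, a t* (π i s))` is at most `2β · ∑ i, EMD (a i) b` for every `b`. -/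
theorem best_color_beta_matchings_approx {X : Type*} [MetricSpace X] {ℓ n : ℕ}
    (hℓ : 1 ≤ ℓ) (hn : 1 ≤ n) (a : Fin ℓ → Fin n → X) (tstar : Fin ℓ)
    (htstar : ∀ t : Fin ℓ, ∑ i, EMD (a tstar) (a i) ≤ ∑ i, EMD (a t) (a i))
    (β : ℝ) (hβ : 1 ≤ β) (π : Fin ℓ → Equiv.Perm (Fin n))
    (hπ : ∀ i : Fin ℓ, ∑ s, dist (a i s) (a tstar (π i s)) ≤ β * EMD (a i) (a tstar)) :
    ∀ b : Fin n → X,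
      ∑ i, ∑ s, dist (a i s) (a tstar (π i s)) ≤ 2 * β * ∑ i, EMD (a i) b := by
  intro b
  haveI : NeZero ℓ := ⟨Nat.one_le_iff_ne_zero.mp hℓ⟩
  -- choose j minimizing EMD (a j) b
  obtain ⟨j, -, hj⟩ := Finset.exists_min_image (Finset.univ : Finset (Fin ℓ))
    (fun i => EMD (a i) b) ⟨0, Finset.mem_univ 0⟩
  have key : ∑ i, EMD (a i) (a tstar) ≤ 2 * ∑ i, EMD (a i) b := by
    have h1 : ∑ i, EMD (a i) (a tstar) = ∑ i, EMD (a tstar) (a i) := by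
      simp [EMD_symm]
    have h2 : ∑ i, EMD (a tstar) (a i) ≤ ∑ i, EMD (a j) (a i) := htstar j
    have h3 : ∑ i, EMD (a j) (a i) ≤ ∑ i, (EMD (a j) b + EMD b (a i)) := by
      apply Finset.sum_le_sum
      intro i _
      exact EMD_triangle _ _ _
    have h4 : ∑ i, (EMD (a j) b + EMD b (a i)) = (ℓ : ℝ) * EMD (a j) b + ∑ i, EMD b (a i) := by
      rw [Finset.sum_add_distrib, Finset.sum_const, Finset.card_univ, Fintype.card_fin,
        nsmul_eq_mul]
    have h5 : (ℓ : ℝ) * EMD (a j) b ≤ ∑ i, EMD (a i) b := by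
      calc (ℓ : ℝ) * EMD (a j) b = ∑ _i : Fin ℓ, EMD (a j) b := by
            rw [Finset.sum_const, Finset.card_univ, Fintype.card_fin, nsmul_eq_mul]
        _ ≤ ∑ i, EMD (a i) b := Finset.sum_le_sum fun i _ => hj i (Finset.mem_univ i)
    have h6 : ∑ i, EMD b (a i) = ∑ i, EMD (a i) b := by simp [EMD_symm]
    linarith
  calc ∑ i, ∑ s, dist (a i s) (a tstar (π i s))
      ≤ ∑ i, β * EMD (a i) (a tstar) :=
        Finset.sum_le_sum fun i _ => hπ i
    _ = β * ∑ i, EMD (a i) (a tstar) := by rw [Finset.mul_sum]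
    _ ≤ β * (2 * ∑ i, EMD (a i) b) := by
        apply mul_le_mul_of_nonneg_left key (by linarith)
    _ = 2 * β * ∑ i, EMD (a i) b := by ring
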